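/- There exists a constant C > 0 such that for every real c ≥ 1, all p, q ∈ ℝ³ with p ≠ q, and all indices i, j ∈ {1,2,3}, the relativistic Landau collision kernel satisfies |Φ^{c,ij}(p,q)| ≤ C·min{(p⁰/c)⟨q⟩⁴, (q⁰/c)⟨p⟩⁴}·|p−q|^{−1}. -/

import Mathlib

open Real MeasureTheory
open scoped BigOperators

noncomputable section

/-- Momentum space `ℝ³`. -/
abbrev E3 := EuclideanSpace ℝ (Fin 3)

/-- Relativistic energy `p⁰ = √(c² + |p|²)`. -/
def pZ (c : ℝ) (p : E3) : ℝ := Real.sqrt (c ^ 2 + ‖p‖ ^ 2)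

/-- Japanese bracket `⟨p⟩ = √(1 + |p|²)`. -/
def jb (p : E3) : ℝ := Real.sqrt (1 + ‖p‖ ^ 2)

/-- Euclidean inner product on `ℝ³`. -/
def dotp (p q : E3) : ℝ := inner ℝ p q

/-- `Λ^c(p,q) = ((p⁰q⁰ − p·q)²/c⁴)·[((p⁰q⁰ − p·q)² − c⁴)/c²]^{−3/2}`. -/
def Lam (c : ℝ) (p q : E3) : ℝ :=
  (pZ c p * pZ c q - dotp p q) ^ 2 / c ^ 4 *
    (((pZ c p * pZ c q - dotp p q) ^ 2 - c ^ 4) / c ^ 2) ^ (-(3 : ℝ) / 2)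

/-- The matrix `S^c(p,q)` with entries
`S^{c,ij}(p,q) = [((p⁰q⁰ − p·q)² − c⁴)/c²]·δ_{ij} − (p−q)_i(p−q)_j
 + [(p⁰q⁰ − p·q − c²)/c²]·(p_i q_j + q_i p_j)`. -/
def Smat (c : ℝ) (p q : E3) (i j : Fin 3) : ℝ :=
  ((pZ c p * pZ c q - dotp p q) ^ 2 - c ^ 4) / c ^ 2 * (if i = j then 1 else 0)
    - (p i - q i) * (p j - q j)
    + (pZ c p * pZ c q - dotp p q - c ^ 2) / c ^ 2 * (p i * q j + q i * p j)

/-- The relativistic Landau collision kernel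
`Φ^{c,ij}(p,q) = (c/p⁰)(c/q⁰)·Λ^c(p,q)·S^{c,ij}(p,q)`. -/
def Phi (c : ℝ) (p q : E3) (i j : Fin 3) : ℝ :=
  c / pZ c p * (c / pZ c q) * Lam c p q * Smat c p q i j

/-! ### Auxiliary lemmas -/

lemma coordAbs (v : E3) (i : Fin 3) : |v i| ≤ ‖v‖ := by
  rw [EuclideanSpace.norm_eq]
  rw [show |v i| = Real.sqrt (|v i|^2) from (Real.sqrt_sq (abs_nonneg _)).symm]
  apply Real.sqrt_le_sqrt
  have := Finset.single_le_sum (f := fun j => ‖v j‖^2) (fun j _ => by positivity)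
    (Finset.mem_univ i)
  simpa [Real.norm_eq_abs] using this

lemma abs3 (a b c : ℝ) : |a - b + c| ≤ |a| + |b| + |c| := by
  calc |a - b + c| ≤ |a - b| + |c| := abs_add_le _ _
    _ ≤ |a| + |b| + |c| := by
        have h := abs_sub a b
        linarith

lemma le_of_sq_le_sq' {a b : ℝ} (ha : 0 ≤ a) (hb : 0 ≤ b) (h : a^2 ≤ b^2) : a ≤ b := by
  calc a = Real.sqrt (a^2) := (Real.sqrt_sq ha).symm
    _ ≤ Real.sqrt (b^2) := Real.sqrt_le_sqrt h
    _ = b := Real.sqrt_sq hb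

/-- Symmetry of the kernel in `p` and `q`. -/
lemma Phi_symm (c : ℝ) (p q : E3) (i j : Fin 3) : Phi c q p i j = Phi c p q i j := by
  unfold Phi Lam Smat dotp
  rw [real_inner_comm q p, mul_comm (pZ c q) (pZ c p)]
  ring

set_option maxHeartbeats 1000000 in
/-- The main quantitative bound, in asymmetric form. -/
lemma Phi_key (c : ℝ) (hc : 1 ≤ c) (p q : E3) (hpq : p ≠ q) (i j : Fin 3) :
    |Phi c p q i j| ≤ 132 * (pZ c p / c * jb q ^ 4) * ‖p - q‖⁻¹ := by
  have hc0 : (0:ℝ) < c := lt_of_lt_of_le one_pos hc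
  set x := ‖p‖ with hxdef
  set y := ‖q‖ with hydef
  have hx : 0 ≤ x := by rw [hxdef]; exact norm_nonneg p
  have hy : 0 ≤ y := by rw [hydef]; exact norm_nonneg q
  set d := ‖p - q‖ with hddef
  have hd0 : 0 < d := by
    rw [hddef]; exact norm_pos_iff.mpr (sub_ne_zero.mpr hpq)
  set P := pZ c p with hPdef
  set Q := pZ c q with hQdef
  have hP2 : P^2 = c^2 + x^2 := by
    rw [hPdef]; unfold pZ; rw [Real.sq_sqrt (by positivity)]
  have hQ2 : Q^2 = c^2 + y^2 := by
    rw [hQdef]; unfold pZ; rw [Real.sq_sqrt (by positivity)]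
  have hP0 : 0 < P := by
    rw [hPdef]; unfold pZ; exact Real.sqrt_pos.mpr (by positivity)
  have hQ0 : 0 < Q := by
    rw [hQdef]; unfold pZ; exact Real.sqrt_pos.mpr (by positivity)
  have hxP : x ≤ P := by
    rw [hPdef]; unfold pZ
    exact (Real.le_sqrt hx (by positivity)).mpr (by linarith only [sq_nonneg c])
  have hyQ : y ≤ Q := by
    rw [hQdef]; unfold pZ
    exact (Real.le_sqrt hy (by positivity)).mpr (by linarith only [sq_nonneg c])
  have hcP : c ≤ P := by
    rw [hPdef]; unfold pZ
    exact (Real.le_sqrt hc0.le (by positivity)).mpr (by linarith only [sq_nonneg x])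
  have hcQ : c ≤ Q := by
    rw [hQdef]; unfold pZ
    exact (Real.le_sqrt hc0.le (by positivity)).mpr (by linarith only [sq_nonneg y])
  set A := dotp p q with hAdef
  clear_value x y d P Q A
  have hA : |A| ≤ x*y := by
    rw [hAdef, hxdef, hydef]; exact abs_real_inner_le_norm p q
  have hAub : A ≤ x*y := (abs_le.mp hA).2
  have hAlb : -(x*y) ≤ A := (abs_le.mp hA).1
  have hd2 : d^2 = x^2 + y^2 - 2*A := by
    rw [hddef, hAdef, hxdef, hydef]; unfold dotp
    rw [norm_sub_sq_real]; ring
  have hsq : (P*Q)^2 = (c^2+x^2)*(c^2+y^2) := by rw [mul_pow, hP2, hQ2]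
  have hPQpos : 0 < P*Q := mul_pos hP0 hQ0
  have hPQ : c^2 + x*y ≤ P*Q := by
    apply le_of_sq_le_sq' (by positivity) hPQpos.le
    rw [hsq]; linarith only [mul_nonneg (sq_nonneg c) (sq_nonneg (x-y))]
  have hxyPQ : x*y ≤ P*Q := by linarith only [hPQ, sq_nonneg c]
  set T := P*Q - A with hTdef
  clear_value T
  have hTge : c^2 ≤ T := by rw [hTdef]; linarith only [hPQ, hAub]
  have hT0 : 0 < T := lt_of_lt_of_le (pow_pos hc0 2) hTge
  have hT2PQ : T ≤ 2*(P*Q) := by rw [hTdef]; linarith only [hAlb, hxyPQ]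
  have hT2 : T^2 ≤ 4*(P^2*Q^2) := by
    calc T^2 = T*T := sq T
      _ ≤ (2*(P*Q))*(2*(P*Q)) := mul_le_mul hT2PQ hT2PQ hT0.le (by linarith only [hPQpos])
      _ = 4*(P^2*Q^2) := by ring
  have hTc : 0 < T + c^2 := by linarith only [hT0, sq_nonneg c]
  set u := T - c^2 with hudef
  set α := x*y - A with hαdef
  set β := P*Q - c^2 - x*y with hβdef
  clear_value u α β
  have hα : 0 ≤ α := by rw [hαdef]; linarith only [hAub]
  have hβ : 0 ≤ β := by rw [hβdef]; linarith only [hPQ]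
  have huαβ : u = α + β := by rw [hudef, hαdef, hβdef, hTdef]; ring
  have hd2' : d^2 = (x-y)^2 + 2*α := by rw [hd2, hαdef]; ring
  have hβid : β*(P*Q + x*y + c^2) = c^2*(x-y)^2 := by
    rw [hβdef]; linear_combination hsq
  have hu : 0 < u := by
    rcases lt_or_ge 0 u with h | h
    · exact h
    · exfalso
      have hβ0 : β = 0 := le_antisymm (by linarith only [huαβ, hα, h]) hβ
      have hα0 : α = 0 := by linarith only [huαβ, hβ0, hα, h]
      have hxy0 : c^2*(x-y)^2 = 0 := by rw [← hβid, hβ0]; ring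
      have hxy1 : (x-y)^2 = 0 := by
        rcases mul_eq_zero.mp hxy0 with h | h
        · exact absurd h (pow_pos hc0 2).ne'
        · exact h
      linarith only [mul_pos hd0 hd0, hd2', hxy1, hα0]
  have h2TQ : c^2*P ≤ 2*(T*Q) := by
    have h1 : c^2*P^2 ≤ (P*Q - x*y)*(P*Q + x*y) := by
      have e : (P*Q - x*y)*(P*Q + x*y) = (P*Q)^2 - (x*y)^2 := by ring
      rw [e, hsq, hP2]
      linarith only [mul_nonneg (sq_nonneg c) (sq_nonneg y)]
    have h3 : 0 ≤ P*Q - x*y := by linarith only [hxyPQ]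
    have h4 : (P*Q - x*y)*(P*Q + x*y) ≤ (P*Q - x*y)*(2*(P*Q)) :=
      mul_le_mul_of_nonneg_left (by linarith only [hxyPQ]) h3
    have h5 : P*Q - x*y ≤ T := by rw [hTdef]; linarith only [hAub]
    have h5' : (P*Q - x*y)*(2*(P*Q)) ≤ T*(2*(P*Q)) :=
      mul_le_mul_of_nonneg_right h5 (by linarith only [hPQpos])
    have h6 : c^2*P*P ≤ 2*(T*Q)*P := by linarith only [h1, h4, h5']
    exact le_of_mul_le_mul_right h6 hP0
  have hGid : T^2 - c^4 = u*(T+c^2) := by rw [hudef]; ring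
  have hG : 0 < T^2 - c^4 := by rw [hGid]; exact mul_pos hu hTc
  set w := (T^2 - c^4)/c^2 with hwdef
  have hw : 0 < w := by rw [hwdef]; exact div_pos hG (pow_pos hc0 2)
  set g := Real.sqrt w with hgdef
  have hg0 : 0 < g := by rw [hgdef]; exact Real.sqrt_pos.mpr hw
  have hg2 : g^2 = w := by rw [hgdef]; exact Real.sq_sqrt hw.le
  have hug : c^2*g^2 = u*(T+c^2) := by
    rw [hg2, hwdef, ← hGid]; field_simp
  have hQc2 : c^2 ≤ Q^2 := by linarith only [hQ2, sq_nonneg y]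
  -- key lower bound : c d ≤ 3 g Q
  have k1 : 2*(c^2*c^2)*α ≤ α*((T+c^2)*Q^2) := by
    have hk : 2*(c^2*c^2) ≤ (T+c^2)*Q^2 := by
      linarith only [mul_nonneg (show (0:ℝ) ≤ T - c^2 by linarith) (sq_nonneg Q),
        mul_nonneg (mul_nonneg (by norm_num : (0:ℝ) ≤ 2) (sq_nonneg c))
          (show (0:ℝ) ≤ Q^2 - c^2 by linarith)]
    calc 2*(c^2*c^2)*α = α*(2*(c^2*c^2)) := by ring
      _ ≤ α*((T+c^2)*Q^2) := mul_le_mul_of_nonneg_left hk hα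
  have k2 : c^2*(c^2*(x-y)^2) ≤ 6*(β*((T+c^2)*Q^2)) := by
    have s1 : c^2*(x-y)^2 ≤ 3*(β*(P*Q)) := by
      linarith only [hβid, mul_nonneg hβ
        (show (0:ℝ) ≤ 3*(P*Q) - (P*Q + x*y + c^2) by linarith only [hPQ, sq_nonneg c, mul_nonneg hx hy])]
    have s2 : β*(c^2*P)*Q ≤ β*(2*(T*Q))*Q :=
      mul_le_mul_of_nonneg_right (mul_le_mul_of_nonneg_left h2TQ hβ) hQ0.le
    linarith only [mul_le_mul_of_nonneg_left s1 (sq_nonneg c), s2,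
      mul_nonneg (mul_nonneg hβ (sq_nonneg c)) (sq_nonneg Q)]
  have hc2d2 : c^2*d^2 ≤ 9*((g*Q)^2) := by
    have e1 : 6*((c^2*g^2)*Q^2) = 6*(α*((T+c^2)*Q^2)) + 6*(β*((T+c^2)*Q^2)) := by
      rw [hug, huαβ]; ring
    have e2 : c^2*(c^2*d^2) = c^2*(c^2*(x-y)^2) + 2*(c^2*c^2)*α := by rw [hd2']; ring
    have hnn : 0 ≤ α*((T+c^2)*Q^2) :=
      mul_nonneg hα (mul_nonneg hTc.le (sq_nonneg Q))
    have main : c^2*(c^2*d^2) ≤ c^2*(9*((g*Q)^2)) := by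
      linarith only [k1, k2, e1, e2, hnn, mul_nonneg (sq_nonneg c) (sq_nonneg (g*Q))]
    exact le_of_mul_le_mul_left main (pow_pos hc0 2)
  have hcd0 : 0 ≤ c*d := mul_nonneg hc0.le hd0.le
  have hgQ0 : 0 ≤ 3*(g*Q) := by positivity
  have hgQ : c*d ≤ 3*(g*Q) := by
    apply le_of_sq_le_sq' hcd0 hgQ0
    have e : (c*d)^2 = c^2*d^2 := by ring
    have e2 : (3*(g*Q))^2 = 9*((g*Q)^2) := by ring
    linarith only [hc2d2, e, e2]
  -- bound on the matrix entry
  set S := Smat c p q i j with hSdef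
  have hSsplit : S = ((T^2 - c^4)/c^2)*(if i = j then (1:ℝ) else 0)
      - (p i - q i)*(p j - q j) + ((T - c^2)/c^2)*(p i * q j + q i * p j) := by
    rw [hSdef]; unfold Smat
    rw [← hAdef, ← hPdef, ← hQdef, ← hTdef]
  have hwid : (T^2 - c^4)/c^2 = g^2 := by rw [hg2, hwdef]
  have t1 : |((T^2 - c^4)/c^2)*(if i = j then (1:ℝ) else 0)| ≤ g^2 := by
    rw [hwid]
    split_ifs with h
    · simp [abs_of_nonneg (sq_nonneg g)]
    · simp [sq_nonneg g]
  have cx : ∀ k, |p k| ≤ x := fun k => by rw [hxdef]; exact coordAbs p k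
  have cy : ∀ k, |q k| ≤ y := fun k => by rw [hydef]; exact coordAbs q k
  have t2 : |(p i - q i)*(p j - q j)| ≤ d*d := by
    rw [abs_mul]
    have c1 : |p i - q i| ≤ d := by
      rw [hddef]; simpa [PiLp.sub_apply] using coordAbs (p - q) i
    have c2 : |p j - q j| ≤ d := by
      rw [hddef]; simpa [PiLp.sub_apply] using coordAbs (p - q) j
    exact mul_le_mul c1 c2 (abs_nonneg _) hd0.le
  have t3 : |((T - c^2)/c^2)*(p i * q j + q i * p j)| ≤ (u/c^2)*(2*(x*y)) := by
    rw [abs_mul]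
    have e : |(T - c^2)/c^2| = u/c^2 := by
      rw [← hudef]; exact abs_of_nonneg (div_nonneg hu.le (sq_nonneg c))
    have habs2 : |p i * q j + q i * p j| ≤ 2*(x*y) := by
      calc |p i * q j + q i * p j| ≤ |p i * q j| + |q i * p j| := abs_add_le _ _
        _ = |p i| * |q j| + |q i| * |p j| := by rw [abs_mul, abs_mul]
        _ ≤ x*y + y*x := add_le_add
            (mul_le_mul (cx i) (cy j) (abs_nonneg _) hx)
            (mul_le_mul (cy i) (cx j) (abs_nonneg _) hy)
        _ = 2*(x*y) := by ring
    rw [e]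
    exact mul_le_mul_of_nonneg_left habs2 (div_nonneg hu.le (sq_nonneg c))
  have hSabs : |S| ≤ g^2 + d*d + (u/c^2)*(2*(x*y)) := by
    rw [hSsplit]
    exact le_trans (abs3 _ _ _) (add_le_add (add_le_add t1 t2) t3)
  have hSc : c^2 * |S| ≤ c^2*g^2 + c^2*(d*d) + 2*(u*(x*y)) := by
    have h1 := mul_le_mul_of_nonneg_left hSabs (sq_nonneg c)
    have e : c^2*((u/c^2)*(2*(x*y))) = 2*(u*(x*y)) := by
      field_simp
    linarith only [h1, e]
  -- explicit formula for |Phi|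
  have hrpow : ((T^2 - c^4)/c^2) ^ (-(3:ℝ)/2) = (g^3)⁻¹ := by
    rw [← hwdef, show (-(3:ℝ)/2) = (1/2)*(-3 : ℝ) by norm_num, Real.rpow_mul hw.le,
      ← Real.sqrt_eq_rpow, ← hgdef,
      show (-3 : ℝ) = ((-3 : ℤ) : ℝ) by norm_num, Real.rpow_intCast, zpow_neg]
    norm_cast
  have hden : 0 < P*Q*(c^2*g^3) :=
    mul_pos hPQpos (mul_pos (pow_pos hc0 2) (pow_pos hg0 3))
  have hPhi_eq : Phi c p q i j = T^2*S/(P*Q*(c^2*g^3)) := by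
    rw [hSdef]; unfold Phi Lam
    rw [← hAdef, ← hPdef, ← hQdef, ← hTdef, hrpow]
    field_simp
  have hPhi_abs : |Phi c p q i j| = T^2 * |S| / (P*Q*(c^2*g^3)) := by
    rw [hPhi_eq, abs_div, abs_mul, abs_pow, sq_abs, abs_of_pos hden]
  -- the three elementary bounds
  have m1 : T^2*(c*d) ≤ (4*(P^2*Q^2))*(3*(g*Q)) :=
    mul_le_mul hT2 hgQ hcd0 (by positivity)
  have L1 : (c^2*g^2)*(T^2*(c^3*d)) ≤ 12*(P^2*(Q^5*(c^2*g^3))) := by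
    calc (c^2*g^2)*(T^2*(c^3*d)) = (T^2*(c*d))*(c^4*g^2) := by ring
      _ ≤ ((4*(P^2*Q^2))*(3*(g*Q)))*(c^4*g^2) :=
          mul_le_mul_of_nonneg_right m1
            (mul_nonneg (by positivity) (sq_nonneg g))
      _ = ((12*(P^2*g^3))*(Q^3*c^2))*c^2 := by ring
      _ ≤ ((12*(P^2*g^3))*(Q^3*c^2))*Q^2 := by
          apply mul_le_mul_of_nonneg_left hQc2
          exact mul_nonneg
            (mul_nonneg (by norm_num) (mul_nonneg (sq_nonneg P) (pow_nonneg hg0.le 3)))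
            (mul_nonneg (pow_nonneg hQ0.le 3) (sq_nonneg c))
      _ = 12*(P^2*(Q^5*(c^2*g^3))) := by ring
  have L2 : (c^2*(d*d))*(T^2*(c^3*d)) ≤ 108*(P^2*(Q^5*(c^2*g^3))) := by
    have hcube : (c*d)^3 ≤ (3*(g*Q))^3 := pow_le_pow_left₀ hcd0 hgQ 3
    calc (c^2*(d*d))*(T^2*(c^3*d)) = (T^2*((c*d)^3))*c^2 := by ring
      _ ≤ ((4*(P^2*Q^2))*((3*(g*Q))^3))*c^2 := by
          apply mul_le_mul_of_nonneg_right _ (sq_nonneg c)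
          exact mul_le_mul hT2 hcube (pow_nonneg hcd0 3) (by positivity)
      _ = 108*(P^2*(Q^5*(c^2*g^3))) := by ring
  have L3 : (2*(u*(x*y)))*(T^2*(c^3*d)) ≤ 12*(P^2*(Q^5*(c^2*g^3))) := by
    apply le_of_mul_le_mul_right _ hTc
    have hTT : T^2 ≤ (2*(P*Q))*(T+c^2) := by
      linarith only [mul_le_mul_of_nonneg_right hT2PQ hT0.le,
        mul_nonneg hPQpos.le (sq_nonneg c)]
    have core : (x*y)*(c^5*(d*g^2)) ≤ 3*(P*(Q^4*(c^2*g^3))) := by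
      calc (x*y)*(c^5*(d*g^2)) = (x*y)*((c*d)*(c^4*g^2)) := by ring
        _ ≤ (P*Q)*((3*(g*Q))*(c^4*g^2)) := by
            apply mul_le_mul hxyPQ
              (mul_le_mul_of_nonneg_right hgQ
                (mul_nonneg (by positivity) (sq_nonneg g)))
              (mul_nonneg hcd0 (mul_nonneg (by positivity) (sq_nonneg g)))
              hPQpos.le
        _ = ((3*(P*(Q^2*g^3)))*c^2)*c^2 := by ring
        _ ≤ ((3*(P*(Q^2*g^3)))*c^2)*Q^2 := by
            apply mul_le_mul_of_nonneg_left hQc2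
            exact mul_nonneg
              (mul_nonneg (by norm_num)
                (mul_nonneg hP0.le (mul_nonneg (sq_nonneg Q) (pow_nonneg hg0.le 3))))
              (sq_nonneg c)
        _ = 3*(P*(Q^4*(c^2*g^3))) := by ring
    calc (2*(u*(x*y)))*(T^2*(c^3*d))*(T+c^2)
        = (T^2*((x*y)*(c^3*d)))*2*(u*(T+c^2)) := by ring
      _ = (T^2*((x*y)*(c^3*d)))*2*(c^2*g^2) := by rw [hug]
      _ = (T^2*((x*y)*(c^5*(d*g^2))))*2 := by ring
      _ ≤ (((2*(P*Q))*(T+c^2))*(3*(P*(Q^4*(c^2*g^3)))))*2 := by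
          apply mul_le_mul_of_nonneg_right _ (by norm_num : (0:ℝ) ≤ 2)
          exact mul_le_mul hTT core
            (mul_nonneg (mul_nonneg hx hy)
              (mul_nonneg (pow_nonneg hc0.le 5) (mul_nonneg hd0.le (sq_nonneg g))))
            (mul_nonneg (mul_nonneg (by norm_num) hPQpos.le) hTc.le)
      _ = 12*(P^2*(Q^5*(c^2*g^3)))*(T+c^2) := by ring
  have harith : T^2 * |S| * (c^5*d) ≤ 132*(P^2*(Q^5*(c^2*g^3))) := by
    have hstep : (c^2 * |S|)*(T^2*(c^3*d))
        ≤ (c^2*g^2 + c^2*(d*d) + 2*(u*(x*y)))*(T^2*(c^3*d)) :=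
      mul_le_mul_of_nonneg_right hSc
        (mul_nonneg (sq_nonneg T) (mul_nonneg (pow_nonneg hc0.le 3) hd0.le))
    have hdist : (c^2*g^2 + c^2*(d*d) + 2*(u*(x*y)))*(T^2*(c^3*d))
        = (c^2*g^2)*(T^2*(c^3*d)) + (c^2*(d*d))*(T^2*(c^3*d))
          + (2*(u*(x*y)))*(T^2*(c^3*d)) := by ring
    have hlhs : T^2 * |S| * (c^5*d) = (c^2 * |S|)*(T^2*(c^3*d)) := by ring
    linarith only [hstep, L1, L2, L3, hdist, hlhs]
  -- conclusion
  have hd5 : 0 < c^5*d := mul_pos (pow_pos hc0 5) hd0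
  have step1 : T^2 * |S| / (P*Q*(c^2*g^3)) ≤ 132*(P*Q^4)/(c^5*d) := by
    rw [div_le_div_iff₀ hden hd5]
    calc T^2 * |S| * (c^5*d) ≤ 132*(P^2*(Q^5*(c^2*g^3))) := harith
      _ = 132*(P*Q^4)*(P*Q*(c^2*g^3)) := by ring
  have hjbq : 0 < jb q := by unfold jb; exact Real.sqrt_pos.mpr (by positivity)
  have hQc : Q ≤ c * jb q := by
    rw [hQdef]; unfold pZ jb
    calc Real.sqrt (c^2 + ‖q‖^2) ≤ Real.sqrt (c^2*(1+‖q‖^2)) :=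
          Real.sqrt_le_sqrt (by nlinarith only [mul_nonneg (show (0:ℝ) ≤ c^2 - 1 by nlinarith only [hc]) (sq_nonneg ‖q‖)])
      _ = Real.sqrt (c^2) * Real.sqrt (1+‖q‖^2) := Real.sqrt_mul (sq_nonneg c) _
      _ = c * Real.sqrt (1+‖q‖^2) := by rw [Real.sqrt_sq hc0.le]
  have step2 : 132*(P*Q^4)/(c^5*d) ≤ 132*(P/c * jb q ^ 4)*d⁻¹ := by
    have hQ4 : Q^4 ≤ c^4*(jb q)^4 := by
      calc Q^4 ≤ (c*jb q)^4 := pow_le_pow_left₀ hQ0.le hQc 4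
        _ = c^4*(jb q)^4 := by ring
    have hre : 132*(P/c * jb q ^ 4)*d⁻¹ = 132*(P*(c^4*(jb q)^4))/(c^5*d) := by
      field_simp
    rw [hre]
    apply (div_le_div_iff_of_pos_right hd5).mpr
    have h1 := mul_le_mul_of_nonneg_left hQ4
      (mul_nonneg (by norm_num : (0:ℝ) ≤ 132) hP0.le)
    linarith only [h1]
  calc |Phi c p q i j| = T^2 * |S| / (P*Q*(c^2*g^3)) := hPhi_abs
    _ ≤ 132*(P*Q^4)/(c^5*d) := step1
    _ ≤ 132*(P/c * jb q ^ 4)*d⁻¹ := step2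

/-- There is `C > 0` such that for every `c ≥ 1`, all `p ≠ q` and all indices `i, j`:
`|Φ^{c,ij}(p,q)| ≤ C·min{(p⁰/c)⟨q⟩⁴, (q⁰/c)⟨p⟩⁴}·|p−q|⁻¹`. -/
theorem stmt9 :
    ∃ C : ℝ, 0 < C ∧ ∀ (c : ℝ), 1 ≤ c → ∀ p q : E3, p ≠ q → ∀ i j : Fin 3,
      |Phi c p q i j| ≤ C * min (pZ c p / c * jb q ^ 4) (pZ c q / c * jb p ^ 4) * ‖p - q‖⁻¹ := by
  refine ⟨132, by norm_num, fun c hc p q hpq i j => ?_⟩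
  have h1 : |Phi c p q i j| ≤ 132 * (pZ c p / c * jb q ^ 4) * ‖p - q‖⁻¹ :=
    Phi_key c hc p q hpq i j
  have h2 : |Phi c p q i j| ≤ 132 * (pZ c q / c * jb p ^ 4) * ‖p - q‖⁻¹ := by
    have := Phi_key c hc q p (fun h => hpq h.symm) i j
    rwa [Phi_symm, norm_sub_rev] at this
  rcases le_total (pZ c p / c * jb q ^ 4) (pZ c q / c * jb p ^ 4) with h | h
  · rwa [min_eq_left h]
  · rwa [min_eq_right h]

end
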